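/- arXiv:2404.12924 — 11 statements merged into one kernel-verified Lean document; each statement's English description precedes it below -/
import Mathlib

section
/- Let N be a finite nonempty totally ordered set, T a totally ordered set, and f : N → T an injective monotone map. Then f is a split monomorphism in the category of totally ordered sets: there exists a monotone map g : T → N with g ∘ f = id. -/
/-- Let `N` be a finite nonempty totally ordered set, `T` a totally ordered
set, and `f : N → T` an injective monotone map. Then `f` is a split monomorphism in the
category of totally ordered sets: there exists a monotone map `g : T → N` with
`g ∘ f = id`. -/
theorem injective_monotone_from_finite_nonempty_linear_order_is_split_mono
    {N T : Type*} [LinearOrder N] [Fintype N] [Nonempty N] [LinearOrder T]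
    (f : N → T) (hmono : Monotone f) (hinj : Function.Injective f) :
    ∃ g : T → N, Monotone g ∧ g ∘ f = id := by
  have hsm : StrictMono f := hmono.strictMono_of_injective hinj
  set S : T → Finset N := fun t => Finset.univ.filter (fun n => f n ≤ t) with hS
  set g : T → N := fun t =>
    if h : (S t).Nonempty then (S t).max' h else Finset.univ.min' Finset.univ_nonempty
    with hg
  refine ⟨g, ?_, ?_⟩
  · intro a b hab
    by_cases ha : (S a).Nonempty
    · have hsub : S a ⊆ S b := fun n hn => by
        simp only [hS, Finset.mem_filter] at hn ⊢
        exact ⟨hn.1, hn.2.trans hab⟩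
      have hb : (S b).Nonempty := ha.mono hsub
      simp only [hg, dif_pos ha, dif_pos hb]
      exact Finset.max'_subset ha hsub
    · simp only [hg, dif_neg ha]
      by_cases hb : (S b).Nonempty
      · simp only [dif_pos hb]
        exact Finset.min'_le _ _ (Finset.mem_univ _)
      · simp [dif_neg hb]
  · funext n
    have hn : n ∈ S (f n) := by simp [hS]
    have hne : (S (f n)).Nonempty := ⟨n, hn⟩
    simp only [Function.comp_apply, hg, dif_pos hne, id_eq]
    apply le_antisymm
    · have hle : f ((S (f n)).max' hne) ≤ f n := by
        have := (S (f n)).max'_mem hne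
        simpa [hS] using this
      exact hsm.le_iff_le.mp hle
    · exact Finset.le_max' _ _ hn
end

section
/- The full inclusion functor from the category of totally ordered sets into the category Pos of partially ordered sets preserves all colimits that exist in the category of totally ordered sets: if a diagram D : J ⥤ Tos has a colimit cocone in Tos, its image under the inclusion is a colimit cocone in Pos. -/
open CategoryTheory Limits

/-- The full inclusion of the category of totally ordered sets (`LinOrd`) into the
category of partially ordered sets (`PartOrd`). -/
def linOrdToPartOrd : LinOrd ⥤ PartOrd where
  obj X := PartOrd.of X
  map f := PartOrd.ofHom f.hom

/-!
A colimit cocone `c` in `LinOrd` is jointly surjective, since the union of the images of its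
legs carries a competing cocone through which the identity of `c.pt` factors. For a cocone `s`
in `PartOrd` and a point `a` of `s.pt`, the maps `y ↦ (a ≤ s.ι y)` into the chain `Prop` form a
cocone in `LinOrd`; descending it along `c` with `a := s.ι y` shows that every inequality
`c.ι y ≤ c.ι y'` already holds as `s.ι y ≤ s.ι y'`. So `c.ι y ↦ s.ι y` is well defined and
monotone, which is exactly the universal property of `c` in `PartOrd`.
-/

section

universe w

variable {J : Type*} [Category J]

noncomputable def PartOrd.isColimitOfExistsRepOfLe {K : J ⥤ PartOrd.{w}} (c : Cocone K)
    (hrep : ∀ x : c.pt, ∃ j y, c.ι.app j y = x)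
    (hle : ∀ (s : Cocone K) {i j : J} {y : K.obj i} {y' : K.obj j},
      c.ι.app i y ≤ c.ι.app j y' → s.ι.app i y ≤ s.ι.app j y') :
    IsColimit c :=
  IsColimit.ofExistsUnique fun s => by
    choose j y hy using hrep
    refine ⟨PartOrd.ofHom ⟨fun x => s.ι.app (j x) (y x), fun x x' hx => hle s (by rwa [hy, hy])⟩,
      fun k => ?_, fun m hm => ?_⟩
    · ext z
      have hz := hy (c.ι.app k z)
      exact le_antisymm (hle s hz.le) (hle s hz.ge)
    · ext x
      conv_lhs => rw [← hy x]
      exact ConcreteCategory.congr_hom (hm (j x)) (y x)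

namespace LinOrd

variable {D : J ⥤ LinOrd.{w}}

def rangeCocone (c : Cocone D) : Cocone D where
  pt := LinOrd.of (⋃ j, Set.range ⇑(c.ι.app j) : Set c.pt)
  ι :=
    { app j := LinOrd.ofHom
        ⟨fun y : D.obj j => ⟨c.ι.app j y, Set.mem_iUnion.2 ⟨j, y, rfl⟩⟩,
          fun _ _ h => (c.ι.app j).hom.monotone h⟩
      naturality i j g := by
        ext y
        exact Subtype.ext (ConcreteCategory.congr_hom (c.w g) y) }

theorem isColimit_exists_rep {c : Cocone D} (hc : IsColimit c) (x : c.pt) :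
    ∃ j y, c.ι.app j y = x := by
  let r := hc.desc (rangeCocone c)
  have hr : r ≫ (LinOrd.ofHom (OrderHom.Subtype.val _) : (rangeCocone c).pt ⟶ c.pt) = 𝟙 c.pt :=
    hc.hom_ext fun j => by
      ext y
      exact congrArg Subtype.val (ConcreteCategory.congr_hom (hc.fac (rangeCocone c) j) y)
  obtain ⟨j, y, hy⟩ := Set.mem_iUnion.1 (r x).2
  exact ⟨j, y, hy.trans (ConcreteCategory.congr_hom hr x)⟩

noncomputable def upperSetCocone (s : Cocone (D ⋙ linOrdToPartOrd)) (a : s.pt) : Cocone D where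
  pt := LinOrd.of (ULift.{w} Prop)
  ι :=
    { app j := LinOrd.ofHom
        ⟨fun y => ULift.up (a ≤ s.ι.app j y), fun _ _ h ha => ha.trans ((s.ι.app j).hom.monotone h)⟩
      naturality i j g := by
        ext y
        exact congrArg (fun b => ULift.up (a ≤ b)) (ConcreteCategory.congr_hom (s.w g) y) }

theorem le_of_isColimit {c : Cocone D} (hc : IsColimit c) (s : Cocone (D ⋙ linOrdToPartOrd))
    {i j : J} {y : D.obj i} {y' : D.obj j} (h : c.ι.app i y ≤ c.ι.app j y') :
    s.ι.app i y ≤ s.ι.app j y' := by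
  let u := hc.desc (upperSetCocone s (s.ι.app i y))
  have hu : ∀ k (z : D.obj k), u (c.ι.app k z) = ULift.up (s.ι.app i y ≤ s.ι.app k z) :=
    fun k z => ConcreteCategory.congr_hom (hc.fac _ k) z
  have key := u.hom.monotone h
  rw [hu, hu] at key
  exact key le_rfl

end LinOrd

end

/-- The full inclusion functor from the category of totally ordered sets
into the category `Pos` of partially ordered sets preserves all colimits that exist in
the category of totally ordered sets: if a diagram `D : J ⥤ Tos` has a colimit cocone
in `Tos`, its image under the inclusion is a colimit cocone in `Pos`. -/
theorem linOrdToPartOrd_preserves_existing_colimits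
    {J : Type u} [Category.{v} J] (D : J ⥤ LinOrd)
    (c : Cocone D) (hc : Nonempty (IsColimit c)) :
    Nonempty (IsColimit (linOrdToPartOrd.mapCocone c)) := by
  obtain ⟨hc⟩ := hc
  exact ⟨PartOrd.isColimitOfExistsRepOfLe _ (LinOrd.isColimit_exists_rep hc)
    fun s _ _ _ _ => LinOrd.le_of_isColimit hc s⟩
end

section
/- The full inclusion functor i : Δ ↪ Pos from the simplex category into the category of partially ordered sets preserves all colimits that exist in Δ: if a diagram D : J ⥤ Δ has a colimit cocone in Δ, then its image under i is a colimit cocone in Pos. -/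
/-!
In `Pos`, an element `x` of a poset `P` is missed by a family of maps into `P` iff the
indicators `P → [1]` of `Ici x` and `Ioi x` agree on all their images, and `x ≤ y` iff every monotone map `P → [1]`
sending `x` to `1` sends `y` to `1`. Both tests only involve maps into `[1]`, which lies in `Δ`.
Since `Δ ↪ Pos` is fully faithful, a colimit cocone in `Δ` passes both tests, so in `Pos` its
legs are jointly surjective and its order is the one forced by every cocone; this makes it a
colimit in `Pos`. The argument works for any fully faithful functor into `Pos` whose image
contains a two-element chain.
-/

open CategoryTheory Limits

/-- The full inclusion `i : Δ ↪ Pos` of the simplex category into the category of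
partially ordered sets, sending `[n]` to the poset `{0, …, n}`. -/
def deltaToPartOrd : SimplexCategory ⥤ PartOrd where
  obj n := PartOrd.of (Fin (n.len + 1))
  map f := PartOrd.ofHom f.toOrderHom

namespace UpperSet

variable {α β : Type*} [Preorder α] [Preorder β]

open Classical in
noncomputable def indicatorHom (U : UpperSet α) {b₀ b₁ : β} (h : b₀ ≤ b₁) : α →o β where
  toFun a := if a ∈ U then b₁ else b₀
  monotone' a a' haa' := by
    by_cases ha : a ∈ U
    · have ha' : a' ∈ U := U.upper haa' ha
      simp [ha, ha']
    · by_cases ha' : a' ∈ U <;> simp [ha, ha', h]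

variable (U : UpperSet α) {b₀ b₁ : β} (h : b₀ ≤ b₁)

theorem indicatorHom_of_mem {a : α} (ha : a ∈ U) : U.indicatorHom h a = b₁ := if_pos ha

theorem indicatorHom_of_notMem {a : α} (ha : a ∉ U) : U.indicatorHom h a = b₀ := if_neg ha

end UpperSet

namespace PartOrd

variable {J : Type*} [Category J] {K : J ⥤ PartOrd}

noncomputable def isColimitOfJointlySurjective (c : Cocone K)
    (hsurj : ∀ x : c.pt, ∃ p : Σ j, K.obj j, c.ι.app p.1 p.2 = x)
    (hle : ∀ (s : Cocone K) (p q : Σ j, K.obj j),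
      c.ι.app p.1 p.2 ≤ c.ι.app q.1 q.2 → s.ι.app p.1 p.2 ≤ s.ι.app q.1 q.2) :
    IsColimit c := by
  choose pre hpre using hsurj
  exact
  { desc s := PartOrd.ofHom
      { toFun x := s.ι.app (pre x).1 (pre x).2
        monotone' x y hxy := hle s _ _ (by rwa [hpre, hpre]) }
    fac s j := PartOrd.ext fun y =>
      le_antisymm (hle s _ ⟨j, y⟩ (hpre _).le) (hle s ⟨j, y⟩ _ (hpre _).ge)
    uniq s m hm := PartOrd.ext fun x => by
      conv_lhs => rw [← hpre x]
      exact congrArg (fun f => f (pre x).2) (hm (pre x).1) }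

end PartOrd

namespace CategoryTheory.Functor.FullyFaithful

section

variable {C D : Type*} [Category C] [Category D] {F : C ⥤ D}
  {J : Type*} [Category J] {K : J ⥤ C} {c : Cocone K}

theorem hom_ext_mapCocone (hF : F.FullyFaithful) (hc : IsColimit c) {T : C}
    {f₁ f₂ : F.obj c.pt ⟶ F.obj T}
    (h : ∀ j, F.map (c.ι.app j) ≫ f₁ = F.map (c.ι.app j) ≫ f₂) : f₁ = f₂ := by
  have : hF.preimage f₁ = hF.preimage f₂ :=
    hc.hom_ext fun j => hF.map_injective (by simpa using h j)
  simpa using congrArg F.map this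

theorem exists_fac_mapCocone (hF : F.FullyFaithful) (hc : IsColimit c)
    (s : Cocone (K ⋙ F)) {T : C} (f : s.pt ⟶ F.obj T) :
    ∃ g : F.obj c.pt ⟶ F.obj T, ∀ j, F.map (c.ι.app j) ≫ g = s.ι.app j ≫ f := by
  let t : Cocone K :=
    { pt := T
      ι :=
        { app j := hF.preimage (s.ι.app j ≫ f)
          naturality j j' u := hF.map_injective (by simpa using s.w_assoc u f) } }
  exact ⟨F.map (hc.desc t), fun j => by simp [t, ← F.map_comp]⟩

end

section PartOrd

variable {C : Type*} [Category C] {F : C ⥤ PartOrd}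
  {J : Type*} [Category J] {K : J ⥤ C} {c : Cocone K} {T : C} {t₀ t₁ : F.obj T}

theorem mapCocone_jointly_surjective (hF : F.FullyFaithful) (hc : IsColimit c) (ht : t₀ < t₁)
    (x : F.obj c.pt) : ∃ p : Σ j, F.obj (K.obj j), F.map (c.ι.app p.1) p.2 = x := by
  by_contra! hx
  -- The indicators of `Ici x` and `Ioi x` differ only at `x`, which no leg reaches.
  have hIci_eq_Ioi : PartOrd.ofHom ((UpperSet.Ici x).indicatorHom ht.le) =
      PartOrd.ofHom ((UpperSet.Ioi x).indicatorHom ht.le) :=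
    hF.hom_ext_mapCocone hc fun j => PartOrd.ext fun y => by
      rw [PartOrd.comp_apply, PartOrd.comp_apply, PartOrd.ofHom_apply, PartOrd.ofHom_apply]
      by_cases hxy : x ≤ F.map (c.ι.app j) y
      · rw [UpperSet.indicatorHom_of_mem _ _ hxy,
          UpperSet.indicatorHom_of_mem _ _ (hxy.lt_of_ne (hx ⟨j, y⟩).symm)]
      · rw [UpperSet.indicatorHom_of_notMem _ _ hxy,
          UpperSet.indicatorHom_of_notMem _ _ fun hlt => hxy (le_of_lt hlt)]
  have := congrArg (fun f => f x) hIci_eq_Ioi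
  rw [PartOrd.ofHom_apply, PartOrd.ofHom_apply, UpperSet.indicatorHom_of_mem _ _ le_rfl,
    UpperSet.indicatorHom_of_notMem _ _ (lt_irrefl x)] at this
  exact ht.ne' this

theorem le_of_mapCocone_le (hF : F.FullyFaithful) (hc : IsColimit c) (ht : t₀ < t₁)
    (s : Cocone (K ⋙ F)) {p q : Σ j, F.obj (K.obj j)}
    (hpq : F.map (c.ι.app p.1) p.2 ≤ F.map (c.ι.app q.1) q.2) :
    s.ι.app p.1 p.2 ≤ s.ι.app q.1 q.2 := by
  by_contra hqp
  -- Test against the indicator of the upper set above `s_p(p)`; it descends along `c`.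
  obtain ⟨g, hg⟩ := hF.exists_fac_mapCocone hc s
    (PartOrd.ofHom ((UpperSet.Ici (s.ι.app p.1 p.2)).indicatorHom ht.le))
  have := g.hom.monotone hpq
  rw [← PartOrd.comp_apply, ← PartOrd.comp_apply, hg, hg, PartOrd.comp_apply,
    PartOrd.comp_apply, PartOrd.ofHom_apply, PartOrd.ofHom_apply,
    UpperSet.indicatorHom_of_mem _ _ le_rfl, UpperSet.indicatorHom_of_notMem _ _ hqp] at this
  exact ht.not_ge this

noncomputable def isColimitMapCoconeOfLT (hF : F.FullyFaithful) (hc : IsColimit c)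
    (ht : t₀ < t₁) : IsColimit (F.mapCocone c) :=
  PartOrd.isColimitOfJointlySurjective _ (hF.mapCocone_jointly_surjective hc ht)
    fun s _ _ => hF.le_of_mapCocone_le hc ht s

theorem preservesColimitsOfSize_of_lt (hF : F.FullyFaithful) (ht : t₀ < t₁) :
    PreservesColimitsOfSize.{w, w'} F where
  preservesColimitsOfShape :=
    { preservesColimit := { preserves hc := ⟨hF.isColimitMapCoconeOfLT hc ht⟩ } }

end PartOrd

end CategoryTheory.Functor.FullyFaithful

def deltaToPartOrd.fullyFaithful : deltaToPartOrd.FullyFaithful where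
  preimage f := SimplexCategory.Hom.mk f.hom

/-- The full inclusion functor `i : Δ ↪ Pos` from the simplex category
into the category of partially ordered sets preserves all colimits that exist in `Δ`:
if a diagram `D : J ⥤ Δ` has a colimit cocone in `Δ`, then its image under `i` is a
colimit cocone in `Pos`. -/
theorem deltaToPartOrd_preserves_existing_colimits
    {J : Type u} [Category.{v} J] (D : J ⥤ SimplexCategory)
    (c : Cocone D) (hc : Nonempty (IsColimit c)) :
    Nonempty (IsColimit (deltaToPartOrd.mapCocone c)) := by
  have : PreservesColimitsOfSize.{v, u} deltaToPartOrd :=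
    deltaToPartOrd.fullyFaithful.preservesColimitsOfSize_of_lt
      (T := SimplexCategory.mk 1) (t₀ := (0 : Fin 2)) (t₁ := (1 : Fin 2)) Fin.zero_lt_one
  exact ⟨isColimitOfPreserves deltaToPartOrd hc.some⟩
end

section
/- The full inclusion i : Δ ↪ Pos is dense: for every partially ordered set P, the canonical cocone exhibits P as the colimit in Pos of the diagram (i ↓ P) → Δ → Pos, where i ↓ P is the comma category whose objects are monotone maps x : [n] → P (finite chains in P) and whose morphisms are monotone maps f : [n] → [m] with y ∘ f = x. -/
open CategoryTheory Limits

/-- For a poset `P`, the canonical cocone over the diagram `(i ↓ P) → Δ → Pos`, whose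
apex is `P` and whose leg at an object `x : i[n] → P` of the comma category `i ↓ P` is
the map `x` itself. -/
def canonicalCocone (P : PartOrd) :
    Cocone (CostructuredArrow.proj deltaToPartOrd P ⋙ deltaToPartOrd) where
  pt := P
  ι :=
    { app := fun x => x.hom
      naturality := fun x y f => by exact (CostructuredArrow.w f).trans (Category.comp_id _).symm }

/-! A cocone over the diagram is determined by its legs at the `0`-simplices: naturality along
the vertex `i : [0] → [n]` shows that the leg at a chain `x` sends `i` to the value at `x i` of the
leg at the corresponding `0`-simplex. Reading off these values gives a map `P → s.pt`, monotone
because every relation `p ≤ q` is a `1`-simplex of `P`, and it is the unique factorisation. -/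

namespace deltaToPartOrd

variable {P : PartOrd}

def vertex (p : P) : CostructuredArrow deltaToPartOrd P :=
  .mk (Y := .mk 0) (PartOrd.ofHom (OrderHom.const _ p))

def edge {p q : P} (hpq : p ≤ q) : CostructuredArrow deltaToPartOrd P :=
  .mk (Y := .mk 1) (PartOrd.ofHom ⟨![p, q], by
    intro a b hab
    fin_cases a <;> fin_cases b <;> simp_all⟩)

def vertexHom (x : CostructuredArrow deltaToPartOrd P) (i : Fin (x.left.len + 1)) :
    vertex (x.hom i) ⟶ x :=
  CostructuredArrow.homMk (SimplexCategory.const _ _ i) rfl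

variable (s : Cocone (CostructuredArrow.proj deltaToPartOrd P ⋙ deltaToPartOrd))

lemma cocone_app_apply (x : CostructuredArrow deltaToPartOrd P) (i : Fin (x.left.len + 1)) :
    s.ι.app x i = s.ι.app (vertex (x.hom i)) (0 : Fin 1) := by
  rw [← s.w (vertexHom x i)]
  rfl

def descFun (p : P) : s.pt := s.ι.app (vertex p) (0 : Fin 1)

lemma monotone_descFun : Monotone (descFun s) := by
  intro p q hpq
  have hp : descFun s p = s.ι.app (edge hpq) (0 : Fin 2) :=
    (cocone_app_apply s (edge hpq) 0).symm
  have hq : descFun s q = s.ι.app (edge hpq) (1 : Fin 2) :=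
    (cocone_app_apply s (edge hpq) 1).symm
  rw [hp, hq]
  exact (s.ι.app (edge hpq)).hom.monotone (show (0 : Fin 2) ≤ 1 by decide)

def desc : P ⟶ s.pt := PartOrd.ofHom ⟨descFun s, monotone_descFun s⟩

end deltaToPartOrd

/-- The full inclusion `i : Δ ↪ Pos` is dense: for every partially
ordered set `P`, the canonical cocone exhibits `P` as the colimit in `Pos` of the
diagram `(i ↓ P) → Δ → Pos`, where `i ↓ P` is the comma category whose objects are
monotone maps `x : [n] → P` (finite chains in `P`) and whose morphisms are monotone
maps `f : [n] → [m]` with `y ∘ f = x`. -/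
theorem deltaToPartOrd_dense (P : PartOrd) :
    Nonempty (IsColimit (canonicalCocone P)) :=
  ⟨{ desc := deltaToPartOrd.desc
     fac := fun s x => by ext i; exact (deltaToPartOrd.cocone_app_apply s x i).symm
     uniq := fun s m hm => by ext p; exact congr($(hm (deltaToPartOrd.vertex p)) (0 : Fin 1)) }⟩
end

section
/- Let X : Δᵒᵖ → Set be a continuous simplicial set. Then the map ⟨d₁, d₀⟩ : X₁ → X₀ × X₀, sending a 1-simplex f to the pair of its faces (d₁ f, d₀ f), is injective. -/
/-!
In `Δ` the vertex inclusions `δ¹, δ⁰ : ⦋0⦌ ⟶ ⦋1⦌` are jointly epimorphic. Dually, in `Δᵒᵖ` the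
"kernel pair" of the family `(d₁, d₀)` out of `⦋1⦌` is `⦋1⦌` itself: the cone with apex `⦋1⦌` and
identity legs over two copies of `⦋1⦌`, both mapping to `⦋0⦌` by `d₁` and by `d₀`, is a limit.
A continuous `X` carries it to a limit of sets, and there this says exactly that `(d₁, d₀)` is
jointly injective on `X₁`.
-/

open CategoryTheory Limits Opposite

/-- A simplicial set `X : Δᵒᵖ ⥤ Type` is *continuous* if it preserves all limits that
exist in `Δᵒᵖ`; equivalently, it takes colimits in `Δ` to limits in `Set`. -/
def IsContinuousSSet (X : SimplexCategoryᵒᵖ ⥤ Type) : Prop :=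
  ∀ ⦃J : Type⦄ [SmallCategory J] (D : J ⥤ SimplexCategoryᵒᵖ) (c : Cone D),
    Nonempty (IsLimit c) → Nonempty (IsLimit (X.mapCone c))

namespace CategoryTheory

variable {C : Type*} [Category* C] {ι : Type*} {Y : C} {Z : ι → C}

def JointlyMono (g : ∀ i, Y ⟶ Z i) : Prop :=
  ∀ ⦃W : C⦄ (u v : W ⟶ Y), (∀ i, u ≫ g i = v ≫ g i) → u = v

theorem JointlyMono.eq_of_types {Y : Type*} {Z : ι → Type _} {g : ∀ i, Y ⟶ Z i}
    (hg : JointlyMono g) {x y : Y} (hxy : ∀ i, g i x = g i y) : x = y :=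
  ConcreteCategory.congr_hom (hg (TypeCat.ofHom fun _ : PUnit => x) (TypeCat.ofHom fun _ => y)
    fun i => by ext; exact hxy i) PUnit.unit

namespace Limits

/-- Two copies of the source, each mapping to every target: over `MulticospanIndex.kernelPair g`
the limit is the joint kernel pair `Y ×_{∏ Z} Y` of the family `g`. -/
def MulticospanShape.kernelPair (ι : Type*) : MulticospanShape where
  L := Bool
  R := ι
  fst _ := true
  snd _ := false

def MulticospanIndex.kernelPair (g : ∀ i, Y ⟶ Z i) :
    MulticospanIndex (MulticospanShape.kernelPair ι) C where
  left _ := Y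
  right := Z
  fst := g
  snd := g

def Multifork.diagonal (g : ∀ i, Y ⟶ Z i) : Multifork (MulticospanIndex.kernelPair g) :=
  Multifork.ofι _ Y (fun _ => 𝟙 Y) fun _ => rfl

def Multifork.isLimitDiagonal {g : ∀ i, Y ⟶ Z i} (hg : JointlyMono g) :
    IsLimit (Multifork.diagonal g) :=
  Multifork.IsLimit.mk _ (fun s => s.ι true)
    (fun s b => by
      have hs : s.ι true = s.ι false := hg _ _ s.condition
      cases b
      exacts [(Category.comp_id _).trans hs, Category.comp_id _])
    (fun s m hm => (Category.comp_id m).symm.trans (hm true))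

theorem Multifork.jointlyMono_of_isLimit {g : ∀ i, Y ⟶ Z i}
    {c : Multifork (MulticospanIndex.kernelPair g)} (hc : IsLimit c)
    (hι : c.ι true = c.ι false) : JointlyMono g := by
  intro W u v huv
  have hu := Multifork.IsLimit.fac hc (fun b : Bool => bif b then u else v) huv true
  have hv := Multifork.IsLimit.fac hc (fun b : Bool => bif b then u else v) huv false
  rw [hι] at hu
  exact hu.symm.trans hv

theorem jointlyMono_map_of_isLimit_mapCone {D : Type*} [Category* D] (F : C ⥤ D)
    {g : ∀ i, Y ⟶ Z i} (hF : IsLimit (F.mapCone (Multifork.diagonal g))) :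
    JointlyMono fun i => F.map (g i) :=
  Multifork.jointlyMono_of_isLimit (Multifork.isLimitMapEquiv _ F hF) rfl

end Limits

end CategoryTheory

namespace SimplexCategory

/-- Every vertex of `⦋n + 1⦌` lies on some facet. -/
theorem jointlyMono_δ_op (n : ℕ) : JointlyMono fun i : Fin (n + 2) => (δ i).op := by
  intro W u v huv
  apply Quiver.Hom.unop_inj
  ext j : 3
  obtain ⟨i, hij⟩ := exists_ne j
  obtain ⟨k, rfl⟩ := Fin.exists_succAbove_eq hij.symm
  have h : δ i ≫ u.unop = δ i ≫ v.unop := Quiver.Hom.op_inj (huv i)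
  simpa [δ] using congrArg (fun w => w.toOrderHom k) h

end SimplexCategory

/-- Let `X : Δᵒᵖ → Set` be a continuous simplicial set. Then the map
`⟨d₁, d₀⟩ : X₁ → X₀ × X₀`, sending a `1`-simplex `f` to the pair of its faces
`(d₁ f, d₀ f)`, is injective. -/
theorem d1_d0_injective (X : SimplexCategoryᵒᵖ ⥤ Type) (hX : IsContinuousSSet X) :
    Function.Injective (fun f : X.obj (op (SimplexCategory.mk 1)) =>
      (X.map (SimplexCategory.δ 1).op f, X.map (SimplexCategory.δ 0).op f)) := by
  intro f g hfg
  obtain ⟨hd₁, hd₀⟩ := Prod.ext_iff.mp hfg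
  obtain ⟨hlim⟩ := hX _ _ ⟨Multifork.isLimitDiagonal (SimplexCategory.jointlyMono_δ_op 0)⟩
  exact (jointlyMono_map_of_isLimit_mapCone X hlim).eq_of_types
    (Fin.forall_fin_two.mpr ⟨hd₀, hd₁⟩)
end

section
/- Let X : Δᵒᵖ → Set be a continuous simplicial set. For every n, the map Xₙ → X₀ⁿ⁺¹ sending an n-simplex to the tuple of its vertices is a bijection onto the set of chains {(x₀, …, xₙ) ∈ X₀ⁿ⁺¹ ∣ xᵢ ≤_X xᵢ₊₁ for all 0 ≤ i < n}. -/
open CategoryTheory Limits Opposite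

/-- The relation `≤_X` on the `0`-simplices of a simplicial set `X`:
`x ≤_X y` iff there is a `1`-simplex `f` with `d₁ f = x` and `d₀ f = y`. -/
def sSetLe (X : SimplexCategoryᵒᵖ ⥤ Type) (x y : X.obj (op (SimplexCategory.mk 0))) : Prop :=
  ∃ f : X.obj (op (SimplexCategory.mk 1)),
    X.map (SimplexCategory.δ 1).op f = x ∧ X.map (SimplexCategory.δ 0).op f = y

/-- The `i`-th vertex of an `n`-simplex `σ`: the image of `σ` under the map induced by
the monotone map `[0] → [n]` picking out `i`. -/
def vertex (X : SimplexCategoryᵒᵖ ⥤ Type) (n : ℕ) (σ : X.obj (op (SimplexCategory.mk n)))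
    (i : Fin (n + 1)) : X.obj (op (SimplexCategory.mk 0)) :=
  X.map (SimplexCategory.const (SimplexCategory.mk 0) (SimplexCategory.mk n) i).op σ

/-!
`[n]` is the colimit in `Δ` of two diagrams: two copies of `[n]` glued along their vertices
(a monotone map out of `[n]` is determined by its values), and the spine of `[n]`, its edges
`i → i + 1` glued at their common vertices (a function on `Fin (n + 1)` is monotone as soon as
it is monotone along each such edge). A continuous `X` turns both into limits of sets. The first
says that two `n`-simplices with the same vertices agree; the second that edges `xᵢ ≤_X xᵢ₊₁`
of a chain are the edges of an `n`-simplex, whose vertices are then the `xᵢ`.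
-/

open SimplexCategory

theorem IsContinuousSSet.exists_of_isColimit {X : SimplexCategoryᵒᵖ ⥤ Type}
    (hX : IsContinuousSSet X) {J : Type} [SmallCategory J] {F : J ⥤ SimplexCategory}
    {c : Cocone F} (hc : IsColimit c) (s : ∀ j, X.obj (op (F.obj j)))
    (hs : ∀ ⦃j k⦄ (f : j ⟶ k), X.map (F.map f).op (s k) = s j) :
    ∃ x : X.obj (op c.pt), ∀ j, X.map (c.ι.app j).op x = s j := by
  obtain ⟨x, hx, -⟩ := (Types.isLimit_iff _).1 (hX F.op c.op ⟨hc.op⟩) (fun j => s j.unop)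
    fun f => hs f.unop
  exact ⟨x, fun j => hx (op j)⟩

namespace SimplexCategory

theorem hom_ext_of_const_comp {n : ℕ} {y : SimplexCategory} {f g : mk n ⟶ y}
    (h : ∀ i, const (mk 0) (mk n) i ≫ f = const (mk 0) (mk n) i ≫ g) : f = g := by
  ext i : 3
  exact congr_toOrderHom_apply (h i) 0

def vertexDoublingShape (n : ℕ) : MultispanShape where
  L := Fin (n + 1)
  R := Bool
  fst _ := false
  snd _ := true

def vertexDoublingIndex (n : ℕ) : MultispanIndex (vertexDoublingShape n) SimplexCategory where
  left _ := mk 0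
  right _ := mk n
  fst i := const (mk 0) (mk n) i
  snd i := const (mk 0) (mk n) i

def vertexDoublingCofork (n : ℕ) : Multicofork (vertexDoublingIndex n) :=
  Multicofork.ofπ _ (mk n) (fun _ => 𝟙 _) fun _ => rfl

def isColimitVertexDoublingCofork (n : ℕ) : IsColimit (vertexDoublingCofork n) :=
  Multicofork.IsColimit.mk _ (fun E => E.π false)
    (fun E b => by
      cases b
      · exact Category.id_comp _
      · exact (Category.id_comp _).trans (hom_ext_of_const_comp fun i => E.condition i))
    fun E m hm => (Category.id_comp m).symm.trans (hm false)

def spineShape (n : ℕ) : MulticospanShape where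
  L := Fin (n + 1)
  R := Fin n
  fst := Fin.castSucc
  snd := Fin.succ

def spineIndex (n : ℕ) : MulticospanIndex (spineShape n) SimplexCategory where
  left _ := mk 0
  right _ := mk 1
  fst _ := δ 1
  snd _ := δ 0

def spineCocone (n : ℕ) : Cocone (spineIndex n).multicospan where
  pt := mk n
  ι :=
    { app
        | .left i => const (mk 0) (mk n) i
        | .right j => mkOfSucc j
      naturality := by
        rintro _ _ (_ | j | j)
        · simp [WalkingMulticospan.Hom.id_eq_id]
        · exact (δ_one_mkOfSucc j).trans (Category.comp_id _).symm
        · exact (δ_zero_mkOfSucc j).trans (Category.comp_id _).symm }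

def isColimitSpineCocone (n : ℕ) : IsColimit (spineCocone n) where
  desc s := mkHom
    { toFun i := (s.ι.app (.left i)).toOrderHom 0
      monotone' := Fin.monotone_iff_le_succ.2 fun j => by
        have hsrc := congr_toOrderHom_apply (s.w (.fst j)) 0
        have htgt := congr_toOrderHom_apply (s.w (.snd j)) 0
        exact hsrc ▸ htgt ▸ (s.ι.app (.right j)).toOrderHom.monotone (Fin.zero_le 1) }
  fac s := by
    rintro (i | j)
    · exact Hom.ext_zero_left _ _
    · refine Hom.ext_one_left _ _ ?_ ?_
      · exact (congr_toOrderHom_apply (s.w (.fst j)) 0).symm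
      · exact (congr_toOrderHom_apply (s.w (.snd j)) 0).symm
  uniq s m hm := hom_ext_of_const_comp fun i => (hm (.left i)).trans (Hom.ext_zero_left _ _)

end SimplexCategory

namespace IsContinuousSSet

variable {X : SimplexCategoryᵒᵖ ⥤ Type}

theorem vertex_injective (hX : IsContinuousSSet X) (n : ℕ) : Function.Injective (vertex X n) := by
  intro σ τ h
  obtain ⟨ρ, hρ⟩ := hX.exists_of_isColimit (isColimitVertexDoublingCofork n)
    (fun | .left i => vertex X n σ i | .right false => σ | .right true => τ) (by
      rintro _ _ (_ | i | i)
      · simp [WalkingMultispan.Hom.id_eq_id]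
      · rfl
      · exact (congrFun h i).symm)
  exact (hρ (.right false)).symm.trans (hρ (.right true))

theorem exists_vertex_eq_of_chain (hX : IsContinuousSSet X) {n : ℕ}
    (c : Fin (n + 1) → X.obj (op (mk 0))) (hc : ∀ i : Fin n, sSetLe X (c i.castSucc) (c i.succ)) :
    ∃ σ, vertex X n σ = c := by
  choose e hsrc htgt using hc
  obtain ⟨σ, hσ⟩ := hX.exists_of_isColimit (isColimitSpineCocone n)
    (fun | .left i => c i | .right j => e j) (by
      rintro _ _ (_ | j | j)
      · simp [WalkingMulticospan.Hom.id_eq_id]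
      · exact hsrc j
      · exact htgt j)
  exact ⟨σ, funext fun i => hσ (.left i)⟩

end IsContinuousSSet

theorem sSetLe_vertex_castSucc_succ (X : SimplexCategoryᵒᵖ ⥤ Type) {n : ℕ}
    (σ : X.obj (op (mk n))) (i : Fin n) :
    sSetLe X (vertex X n σ i.castSucc) (vertex X n σ i.succ) :=
  ⟨X.map (mkOfSucc i).op σ, by
    simp [vertex, ← Functor.map_comp_apply, ← op_comp]⟩

/-- Let `X : Δᵒᵖ → Set` be a continuous simplicial set. For every `n`,
the map `Xₙ → X₀ⁿ⁺¹` sending an `n`-simplex to the tuple of its vertices is a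
bijection onto the set of chains
`{(x₀, …, xₙ) ∈ X₀ⁿ⁺¹ ∣ xᵢ ≤_X xᵢ₊₁ for all 0 ≤ i < n}`. -/
theorem vertex_map_bijective_onto_chains (X : SimplexCategoryᵒᵖ ⥤ Type)
    (hX : IsContinuousSSet X) (n : ℕ) :
    Function.Injective (fun σ : X.obj (op (SimplexCategory.mk n)) => vertex X n σ) ∧
    Set.range (fun σ : X.obj (op (SimplexCategory.mk n)) => vertex X n σ) =
      {c : Fin (n + 1) → X.obj (op (SimplexCategory.mk 0)) |
        ∀ i : Fin n, sSetLe X (c i.castSucc) (c i.succ)} := by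
  refine ⟨hX.vertex_injective n, Set.ext fun c => ⟨?_, hX.exists_vertex_eq_of_chain c⟩⟩
  rintro ⟨σ, rfl⟩
  exact sSetLe_vertex_castSucc_succ X σ
end

section
/- Let X : Δᵒᵖ → Set be a continuous simplicial set. Under the identification of Xₙ with chains (x₀, …, xₙ) in (X₀, ≤_X), the face map dᵢ : Xₙ → Xₙ₋₁ is given by deleting the i-th entry: dᵢ(x₀, …, xₙ) = (x₀, …, xᵢ₋₁, xᵢ₊₁, …, xₙ). In particular, the relation ≤_X is transitive. -/
open CategoryTheory Limits Opposite

/-!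
The vertex formula is functoriality: the `j`-th vertex map of `[n]` followed by `δᵢ` is the
`δᵢ(j)`-th vertex map of `[n+1]`. For transitivity, `[2]` is the pushout in `Δ` of two copies of
`[1]` glued along the endpoint `1` of the first and `0` of the second (faces `δ₂` and `δ₀`). A
continuous `X` turns this into a pullback `X₂ ≅ X₁ ×_{X₀} X₁`, so composable edges `x → y → z`
span a `2`-simplex, whose face `d₁` is an edge `x → z`.
-/

namespace SimplexCategory

open Simplicial

lemma toOrderHom_one_eq_zero_of_δ_comp_eq {n : SimplexCategory} {a b : ⦋1⦌ ⟶ n}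
    (h : δ 0 ≫ a = δ 1 ≫ b) : a.toOrderHom 1 = b.toOrderHom 0 :=
  congr_arg (fun f : ⦋0⦌ ⟶ n => f.toOrderHom 0) h

theorem isPushout_δ_δ :
    IsPushout (δ (0 : Fin 2)) (δ (1 : Fin 2)) (δ (2 : Fin 3)) (δ (0 : Fin 3)) := by
  refine ⟨⟨δ_comp_δ (i := 0) (j := 1) (by decide)⟩, ⟨PushoutCocone.IsColimit.mk _
    (fun s => mkOfLeComp (n := s.pt.len) (s.inl.toOrderHom 0) (s.inl.toOrderHom 1)
      (s.inr.toOrderHom 1)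
      (s.inl.toOrderHom.monotone (by decide))
      ((toOrderHom_one_eq_zero_of_δ_comp_eq s.condition).trans_le
        (s.inr.toOrderHom.monotone (by decide))))
    (fun s => Hom.ext_one_left _ _)
    (fun s => Hom.ext_one_left _ _ (toOrderHom_one_eq_zero_of_δ_comp_eq s.condition))
    (fun s m hl hr => ?_)⟩⟩
  ext i : 3
  fin_cases i
  · exact congr_arg (fun f : ⦋1⦌ ⟶ s.pt => f.toOrderHom 0) hl
  · exact congr_arg (fun f : ⦋1⦌ ⟶ s.pt => f.toOrderHom 1) hl
  · exact congr_arg (fun f : ⦋1⦌ ⟶ s.pt => f.toOrderHom 1) hr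

end SimplexCategory

open SimplexCategory Simplicial

lemma vertex_map (X : SimplexCategoryᵒᵖ ⥤ Type) {m n : ℕ} (f : ⦋m⦌ ⟶ ⦋n⦌) (σ : X _⦋n⦌)
    (j : Fin (m + 1)) : vertex X m (X.map f.op σ) j = vertex X n σ (f.toOrderHom j) := by
  rw [vertex, vertex, ← Functor.map_comp_apply, ← op_comp, const_comp]

namespace IsContinuousSSet

variable {X : SimplexCategoryᵒᵖ ⥤ Type}

lemma map_isPullback {P A B C : SimplexCategoryᵒᵖ} {t : P ⟶ A} {l : P ⟶ B} {r : A ⟶ C}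
    {b : B ⟶ C} (hX : IsContinuousSSet X) (h : IsPullback t l r b) :
    IsPullback (X.map t) (X.map l) (X.map r) (X.map b) :=
  have : PreservesLimit (cospan r b) X := ⟨fun hc => hX _ _ ⟨hc⟩⟩
  X.map_isPullback h

lemma exists_map_δ_two_eq_and_map_δ_zero_eq (hX : IsContinuousSSet X) {f g : X _⦋1⦌}
    (h : X.map (δ 0).op f = X.map (δ 1).op g) :
    ∃ t : X _⦋2⦌, X.map (δ 2).op t = f ∧ X.map (δ 0).op t = g := by
  obtain ⟨t, hg, hf⟩ :=
    Types.exists_of_isPullback (hX.map_isPullback isPushout_δ_δ.op) g f h.symm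
  exact ⟨t, hf, hg⟩

lemma sSetLe_trans (hX : IsContinuousSSet X) {x y z : X _⦋0⦌} (hxy : sSetLe X x y)
    (hyz : sSetLe X y z) : sSetLe X x z := by
  obtain ⟨f, rfl, rfl⟩ := hxy
  obtain ⟨g, hg, rfl⟩ := hyz
  obtain ⟨t, rfl, rfl⟩ := hX.exists_map_δ_two_eq_and_map_δ_zero_eq hg.symm
  refine ⟨X.map (δ 1).op t, ?_, ?_⟩ <;>
    simp only [← Functor.map_comp_apply, ← op_comp]
  · exact congr_arg (fun φ => X.map (Quiver.Hom.op φ) t) (δ_comp_δ_self (i := 1))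
  · exact congr_arg (fun φ => X.map (Quiver.Hom.op φ) t) (δ_comp_δ_self (i := 0)).symm

end IsContinuousSSet

/-- Let `X : Δᵒᵖ → Set` be a continuous simplicial set. Under the
identification of `Xₙ` with chains `(x₀, …, xₙ)` in `(X₀, ≤_X)` via the vertex maps,
the face map `dᵢ : Xₙ → Xₙ₋₁` is given by deleting the `i`-th entry:
`dᵢ(x₀, …, xₙ) = (x₀, …, xᵢ₋₁, xᵢ₊₁, …, xₙ)` (i.e. the `j`-th vertex of `dᵢ σ` is the
`δᵢ(j)`-th vertex of `σ`). In particular, the relation `≤_X` is transitive. -/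
theorem face_maps_delete_and_le_transitive (X : SimplexCategoryᵒᵖ ⥤ Type)
    (hX : IsContinuousSSet X) :
    (∀ (n : ℕ) (i : Fin (n + 2)) (σ : X.obj (op (SimplexCategory.mk (n + 1))))
      (j : Fin (n + 1)),
      vertex X n (X.map (SimplexCategory.δ i).op σ) j = vertex X (n + 1) σ (i.succAbove j)) ∧
    Transitive (sSetLe X) :=
  ⟨fun _ i σ j => vertex_map X (δ i) σ j, fun _ _ _ => hX.sSetLe_trans⟩
end

section
/- Let X : Δᵒᵖ → Set be a continuous simplicial set. Then the relation ≤_X on X₀ is antisymmetric: if x ≤_X y and y ≤_X x then x = y. -/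
open CategoryTheory Limits Opposite

/-! A pair of `1`-simplices `f : x → y` and `g : y → x` is a section of `X` over the diagram
of two edges glued crosswise at their ends. In `Δ` the colimit of that diagram is `⦋0⦌`:
a monotone map taking the ends of one edge to the ends of the other in reverse order is
constant. Continuity turns this into a limit in `Set`, so `f` is degenerate and its two
faces `x` and `y` agree. -/

open Simplicial

namespace SimplexCategory

theorem eq_const_of_δ_comp_eq_δ_comp {Z : SimplexCategory} {f g : ⦋1⦌ ⟶ Z}
    (h₀ : δ 0 ≫ f = δ 1 ≫ g) (h₁ : δ 1 ≫ f = δ 0 ≫ g) :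
    f = const _ _ (f.toOrderHom 0) ∧ g = const _ _ (f.toOrderHom 0) := by
  have hf₁ : f.toOrderHom 1 = g.toOrderHom 0 := congr_toOrderHom_apply h₀ 0
  have hg₁ : g.toOrderHom 1 = f.toOrderHom 0 := (congr_toOrderHom_apply h₁ 0).symm
  have hf : f.toOrderHom 1 = f.toOrderHom 0 :=
    le_antisymm (hf₁ ▸ hg₁ ▸ g.toOrderHom.monotone zero_le_one)
      (f.toOrderHom.monotone zero_le_one)
  exact ⟨Hom.ext_one_left _ _ rfl hf, Hom.ext_one_left _ _ (hf₁ ▸ hf) hg₁⟩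

abbrev twoCycleShape : MulticospanShape where
  L := Fin 2
  R := Fin 2
  fst _ := 0
  snd _ := 1

/-- Two edges glued crosswise at their ends: vertex `v` is vertex `v` of edge `0` and
vertex `v.rev` of edge `1`. -/
def twoCycle : MulticospanIndex twoCycleShape SimplexCategoryᵒᵖ where
  left _ := op ⦋1⦌
  right _ := op ⦋0⦌
  fst v := (δ v.rev).op
  snd v := (δ v).op

def twoCycleFork : Multifork twoCycle :=
  Multifork.ofι _ (op ⦋0⦌) (fun _ => (const ⦋1⦌ ⦋0⦌ 0).op) fun _ =>
    Quiver.Hom.unop_inj (Subsingleton.elim _ _)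

theorem twoCycle_ι_unop_eq_const (E : Multifork twoCycle) (e : Fin 2) :
    (E.ι e).unop = const _ _ ((E.ι 0).unop.toOrderHom 0) := by
  have h := eq_const_of_δ_comp_eq_δ_comp (congrArg Quiver.Hom.unop (E.condition 1))
    (congrArg Quiver.Hom.unop (E.condition 0))
  fin_cases e
  exacts [h.1, h.2]

def isLimitTwoCycleFork : IsLimit twoCycleFork :=
  Multifork.IsLimit.mk _
    (fun E => (const ⦋0⦌ E.pt.unop ((E.ι 0).unop.toOrderHom 0)).op)
    (fun E e => Quiver.Hom.unop_inj (twoCycle_ι_unop_eq_const E e).symm)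
    fun _ m hm => Quiver.Hom.unop_inj <| (eq_const_of_zero m.unop).trans <|
      congrArg _ (congr_toOrderHom_apply (congrArg Quiver.Hom.unop (hm 0)) 0)

end SimplexCategory

open SimplexCategory

theorem IsContinuousSSet.exists_map_const_eq {X : SimplexCategoryᵒᵖ ⥤ Type}
    (hX : IsContinuousSSet X) {f g : X.obj (op ⦋1⦌)}
    (h₀ : X.map (δ 0).op f = X.map (δ 1).op g) (h₁ : X.map (δ 1).op f = X.map (δ 0).op g) :
    ∃ z, X.map (const ⦋1⦌ ⦋0⦌ 0).op z = f := by
  obtain ⟨hlim⟩ := hX _ twoCycleFork ⟨isLimitTwoCycleFork⟩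
  have hsurj := ((twoCycleFork.map X).isLimit_types_iff.1
    ⟨Multifork.isLimitMapEquiv _ _ hlim⟩).2
  obtain ⟨z, hz⟩ := hsurj ⟨![f, g], fun v => by fin_cases v <;> assumption⟩
  exact ⟨z, congrArg (·.val 0) hz⟩

theorem map_δ_map_const {X : SimplexCategoryᵒᵖ ⥤ Type} (i : Fin 2) (z : X.obj (op ⦋0⦌)) :
    X.map (δ i).op (X.map (const ⦋1⦌ ⦋0⦌ 0).op z) = z := by
  rw [← Functor.map_comp_apply, ← op_comp, Subsingleton.elim (δ i ≫ _) (𝟙 _),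
    op_id, Functor.map_id_apply]

/-- Let `X : Δᵒᵖ → Set` be a continuous simplicial set. Then the
relation `≤_X` on `X₀` is antisymmetric: if `x ≤_X y` and `y ≤_X x` then `x = y`. -/
theorem sSetLe_antisymm (X : SimplexCategoryᵒᵖ ⥤ Type) (hX : IsContinuousSSet X)
    (x y : X.obj (op (SimplexCategory.mk 0))) (hxy : sSetLe X x y) (hyx : sSetLe X y x) :
    x = y := by
  obtain ⟨f, rfl, rfl⟩ := hxy
  obtain ⟨g, hg₁, hg₀⟩ := hyx
  obtain ⟨z, rfl⟩ := hX.exists_map_const_eq hg₁.symm hg₀.symm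
  rw [map_δ_map_const, map_δ_map_const]
end

section
/- Every continuous simplicial set is isomorphic to the nerve of a partially ordered set: if X : Δᵒᵖ → Set is continuous, then X ≅ N(P) where P is the poset (X₀, ≤_X). -/
open CategoryTheory Limits Opposite

/-- The nerve functor `N : Pos ⥤ [Δᵒᵖ, Set]`, i.e. the restricted Yoneda embedding
along `i : Δ ↪ Pos`: it sends a poset `P` to the simplicial set `N(P) = Pos(i(-), P)`,
whose `n`-simplices are the monotone maps `[n] → P`, with simplicial structure given
by precomposition. -/
def posetNerve : PartOrd ⥤ SimplexCategoryᵒᵖ ⥤ Type :=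
  yoneda ⋙ (Functor.whiskeringLeft _ _ Type).obj deltaToPartOrd.op

/-!
Continuity lets us compute `X` on colimits in `Δ`, and two colimit presentations of `[n]` do
the work. First, `[n]` is the colimit of two copies of itself glued along its vertices (the
vertices are jointly epimorphic), so a simplex of `X` is determined by its vertices. Second,
`[n]` is the canonical colimit of its simplices of dimension `≤ 1`, so every compatible family
of vertices and edges glues to an `n`-simplex; by the first point such a family is just a
`≤_X`-monotone map `[n] → X₀`. Hence taking vertices is an isomorphism `X ≅ N(X₀, ≤_X)`.
-/

open SimplexCategory Simplicial

namespace SimplexCategory.Truncated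

abbrev vertexArrow (n : ℕ) {a : SimplexCategory} (i : Fin (a.len + 1)) :
    CostructuredArrow (inclusion n) a :=
  CostructuredArrow.mk (Y := ⦋0, Nat.zero_le n⦌ₙ) (const ⦋0⦌ a i)

variable {n : ℕ}

lemma cocone_ι_app_apply {a : SimplexCategory}
    (s : Cocone (CostructuredArrow.proj (inclusion n) a ⋙ inclusion n))
    (g : CostructuredArrow (inclusion n) a) (c : Fin (g.left.obj.len + 1)) :
    (s.ι.app g).toOrderHom c = (s.ι.app (vertexArrow n (g.hom.toOrderHom c))).toOrderHom 0 := by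
  let φ : vertexArrow n (g.hom.toOrderHom c) ⟶ g :=
    CostructuredArrow.homMk (Hom.tr (const ⦋0⦌ g.left.obj c) (by simp) g.left.property) rfl
  rw [← s.w φ]
  rfl

lemma isDense_inclusion (hn : 1 ≤ n) : (inclusion n).IsDense where
  isDenseAt a := ⟨{
    desc s := Hom.mk
      { toFun i := (s.ι.app (vertexArrow n i)).toOrderHom 0
        monotone' i j hij := by
          let e : CostructuredArrow (inclusion n) a :=
            CostructuredArrow.mk (Y := ⦋1, hn⦌ₙ) (mkOfLe i j hij : ⦋1⦌ ⟶ a)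
          calc _ = (s.ι.app e).toOrderHom 0 := (cocone_ι_app_apply s e 0).symm
            _ ≤ (s.ι.app e).toOrderHom 1 := (s.ι.app e).toOrderHom.monotone (Fin.zero_le 1)
            _ = _ := cocone_ι_app_apply s e 1 }
    fac s g := by
      ext c : 3
      exact (cocone_ι_app_apply s g c).symm
    uniq s m hm := by
      ext i : 3
      simp only [← hm]
      rfl }⟩

end SimplexCategory.Truncated

namespace CategoryTheory.Limits

universe w

/-- Two copies of `B` glued along a family `f i : A i ⟶ B`; the family is jointly epimorphic
exactly when `B` itself, with identity legs, is the colimit. -/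
def MultispanShape.cokernelPair (ι : Type w) : MultispanShape.{w, 0} where
  L := ι
  R := Bool
  fst _ := false
  snd _ := true

variable {C : Type*} [Category C] {ι : Type w} {A : ι → C} {B : C}

def MultispanIndex.cokernelPair (f : ∀ i, A i ⟶ B) :
    MultispanIndex (MultispanShape.cokernelPair ι) C where
  left := A
  right _ := B
  fst := f
  snd := f

def Multicofork.cokernelPair (f : ∀ i, A i ⟶ B) : Multicofork (MultispanIndex.cokernelPair f) :=
  Multicofork.ofπ _ B (fun _ => 𝟙 B) (fun _ => rfl)

def Multicofork.isColimitCokernelPair (f : ∀ i, A i ⟶ B)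
    (hf : ∀ {T : C} (g h : B ⟶ T), (∀ i, f i ≫ g = f i ≫ h) → g = h) :
    IsColimit (Multicofork.cokernelPair f) :=
  Multicofork.IsColimit.mk _ (fun E => E.π false)
    (fun E b => by
      cases b
      · exact Category.id_comp _
      · exact (Category.id_comp _).trans (hf _ _ E.condition))
    (fun E m hm => (Category.id_comp m).symm.trans (hm false))

end CategoryTheory.Limits

section Vertices

variable (X : SimplexCategoryᵒᵖ ⥤ Type)

def sSetVertex {a : SimplexCategory} (i : Fin (a.len + 1)) : X.obj (op a) → X.obj (op ⦋0⦌) :=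
  X.map (const ⦋0⦌ a i).op

variable {X}

lemma sSetVertex_map {m m' : SimplexCategoryᵒᵖ} (u : m ⟶ m') (σ : X.obj m)
    (i : Fin (m'.unop.len + 1)) :
    sSetVertex X i (X.map u σ) = sSetVertex X (u.unop.toOrderHom i) σ := by
  change X.map (const ⦋0⦌ _ i).op (X.map u σ) = X.map (const ⦋0⦌ _ i ≫ u.unop).op σ
  rw [op_comp, Quiver.Hom.op_unop, Functor.map_comp_apply]

lemma sSetVertex_zero (x : X.obj (op ⦋0⦌)) : sSetVertex X 0 x = x := by
  simp only [sSetVertex, const_eq_id, op_id, X.map_id_apply]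

lemma sSetLe_iff {x y : X.obj (op ⦋0⦌)} :
    sSetLe X x y ↔ ∃ e : X.obj (op ⦋1⦌), sSetVertex X 0 e = x ∧ sSetVertex X 1 e = y := by
  simp only [sSetLe, sSetVertex, δ_one_eq_const, δ_zero_eq_const]

lemma sSetLe_sSetVertex {a : SimplexCategory} (σ : X.obj (op a)) {i j : Fin (a.len + 1)}
    (hij : i ≤ j) : sSetLe X (sSetVertex X i σ) (sSetVertex X j σ) :=
  sSetLe_iff.2
    ⟨X.map (mkOfLe i j hij : ⦋1⦌ ⟶ a).op σ, sSetVertex_map _ σ 0, sSetVertex_map _ σ 1⟩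

lemma exists_sSetVertex_eq_of_len_le_one {b : SimplexCategory} (hb : b.len ≤ 1)
    (v : Fin (b.len + 1) → X.obj (op ⦋0⦌)) (hv : ∀ i j, i ≤ j → sSetLe X (v i) (v j)) :
    ∃ y : X.obj (op b), ∀ c, sSetVertex X c y = v c := by
  obtain ⟨k, rfl⟩ : ∃ k, b = ⦋k⦌ := ⟨b.len, rfl⟩
  obtain rfl | rfl : k = 0 ∨ k = 1 := by rw [len_mk] at hb; omega
  · exact ⟨v 0, fun c => by fin_cases c; exact sSetVertex_zero _⟩
  · obtain ⟨e, he0, he1⟩ := sSetLe_iff.1 (hv 0 1 (Fin.zero_le 1))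
    exact ⟨e, fun c => by fin_cases c <;> assumption⟩

end Vertices

namespace IsContinuousSSet

variable {X : SimplexCategoryᵒᵖ ⥤ Type}

lemma eq_of_map_eq (hX : IsContinuousSSet X) {ι : Type} {A : ι → SimplexCategory}
    {B : SimplexCategory} (f : ∀ i, A i ⟶ B)
    (hf : ∀ {T : SimplexCategory} (g h : B ⟶ T), (∀ i, f i ≫ g = f i ≫ h) → g = h)
    {σ τ : X.obj (op B)} (h : ∀ i, X.map (f i).op σ = X.map (f i).op τ) : σ = τ := by
  obtain ⟨hl⟩ := hX _ _ ⟨(Multicofork.isColimitCokernelPair f hf).op⟩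
  let x (j : (WalkingMultispan (MultispanShape.cokernelPair ι))ᵒᵖ) :
      ((MultispanIndex.cokernelPair f).multispan.op ⋙ X).obj j :=
    match j with
    | op (.left i) => X.map (f i).op σ
    | op (.right false) => σ
    | op (.right true) => τ
  let s : ((MultispanIndex.cokernelPair f).multispan.op ⋙ X).sections := ⟨x, by
    rintro ⟨_⟩ ⟨_⟩ ⟨_ | ⟨i⟩ | ⟨i⟩⟩
    · exact X.map_id_apply (op _) _
    · rfl
    · exact (h i).symm⟩
  have hσ : (Types.isLimitEquivSections hl).symm s = σ :=
    (X.map_id_apply _ _).symm.trans (Types.isLimitEquivSections_symm_apply hl s (op (.right false)))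
  have hτ : (Types.isLimitEquivSections hl).symm s = τ :=
    (X.map_id_apply _ _).symm.trans (Types.isLimitEquivSections_symm_apply hl s (op (.right true)))
  exact hσ.symm.trans hτ

lemma ext_sSetVertex (hX : IsContinuousSSet X) {a : SimplexCategory} {σ τ : X.obj (op a)}
    (h : ∀ i, sSetVertex X i σ = sSetVertex X i τ) : σ = τ :=
  hX.eq_of_map_eq (fun i => const ⦋0⦌ a i)
    (fun g g' hg => by ext i : 3; exact congr_toOrderHom_apply (hg i) 0) h

lemma exists_sSetVertex_eq (hX : IsContinuousSSet X) {a : SimplexCategory}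
    (v : Fin (a.len + 1) → X.obj (op ⦋0⦌))
    (hv : ∀ (b : Truncated 1) (f : b.obj ⟶ a),
      ∃ y : X.obj (op b.obj), ∀ c, sSetVertex X c y = v (f.toOrderHom c)) :
    ∃ σ : X.obj (op a), ∀ i, sSetVertex X i σ = v i := by
  have := Truncated.isDense_inclusion (n := 1) le_rfl
  obtain ⟨hl⟩ := hX _ _ ⟨((Truncated.inclusion 1).denseAt a).op⟩
  choose y hy using fun g : CostructuredArrow (Truncated.inclusion 1) a => hv g.left g.hom
  let s : ((CostructuredArrow.proj (Truncated.inclusion 1) a ⋙ Truncated.inclusion 1).op ⋙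
      X).sections :=
    ⟨fun g => y g.unop, fun {g g'} φ => hX.ext_sSetVertex fun c => by
      calc _ = sSetVertex X (φ.unop.left.hom.toOrderHom c) (y g.unop) := sSetVertex_map _ _ c
        _ = v (g.unop.hom.toOrderHom (φ.unop.left.hom.toOrderHom c)) := hy _ _
        _ = v (g'.unop.hom.toOrderHom c) := by rw [← CostructuredArrow.w φ.unop]; rfl
        _ = _ := (hy _ _).symm⟩
  refine ⟨(Types.isLimitEquivSections hl).symm s, fun i => ?_⟩
  have hσ : sSetVertex X i ((Types.isLimitEquivSections hl).symm s) =
      y (Truncated.vertexArrow 1 i) :=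
    Types.isLimitEquivSections_symm_apply hl s (op (Truncated.vertexArrow 1 i))
  exact hσ.trans ((sSetVertex_zero _).symm.trans (hy (Truncated.vertexArrow 1 i) 0))

end IsContinuousSSet

section PosetNerve

variable {X : SimplexCategoryᵒᵖ ⥤ Type} [PartialOrder (X.obj (op ⦋0⦌))]
  (hle : ∀ x y, x ≤ y ↔ sSetLe X x y)

def toPosetNerve : X ⟶ posetNerve.obj (PartOrd.of (X.obj (op ⦋0⦌))) where
  app m := TypeCat.ofHom fun σ => PartOrd.ofHom
    ⟨fun i => sSetVertex X i σ, fun _ _ hij => (hle _ _).2 (sSetLe_sSetVertex σ hij)⟩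
  naturality _ _ u := by
    refine ConcreteCategory.hom_ext _ _ fun σ => ?_
    exact PartOrd.hom_ext (OrderHom.ext _ _ (funext fun i => sSetVertex_map u σ i))

lemma toPosetNerve_app_bijective (hX : IsContinuousSSet X) (m : SimplexCategoryᵒᵖ) :
    Function.Bijective ((toPosetNerve hle).app m) := by
  constructor
  · intro σ τ h
    exact hX.ext_sSetVertex fun i => congrArg (fun g : deltaToPartOrd.obj m.unop ⟶ _ => g.hom i) h
  intro g
  obtain ⟨σ, hσ⟩ := hX.exists_sSetVertex_eq g.hom fun b f =>
    exists_sSetVertex_eq_of_len_le_one b.property (g.hom ∘ f.toOrderHom)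
      fun i j hij => (hle _ _).1 (g.hom.monotone (f.toOrderHom.monotone hij))
  exact ⟨σ, PartOrd.hom_ext (OrderHom.ext _ _ (funext hσ))⟩

end PosetNerve

/-- Every continuous simplicial set is isomorphic to the nerve of a
partially ordered set: if `X : Δᵒᵖ → Set` is continuous, then `X ≅ N(P)` where `P` is
the poset `(X₀, ≤_X)` (here the partial order structure on `X₀` whose order relation
is `≤_X` is given as a hypothesis; it exists since `≤_X` is a partial order). -/
theorem continuous_sset_iso_nerve (X : SimplexCategoryᵒᵖ ⥤ Type) (hX : IsContinuousSSet X)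
    (instP : PartialOrder (X.obj (op (SimplexCategory.mk 0))))
    (hle : ∀ x y, instP.le x y ↔ sSetLe X x y) :
    Nonempty (X ≅ posetNerve.obj (@PartOrd.of (X.obj (op (SimplexCategory.mk 0))) instP)) := by
  have : ∀ m, IsIso ((toPosetNerve hle).app m) := fun m =>
    (isIso_iff_bijective _).2 (toPosetNerve_app_bijective hle hX m)
  have := NatIso.isIso_of_isIso_app (toPosetNerve hle)
  exact ⟨asIso (toPosetNerve hle)⟩
end

section
/- In the simplex category Δ, for every n ≥ 0 the following square is a pushout: top map [0] → [n+2] the monotone map picking out the element 0 (the composite δ_{n+2} ⋯ δ₁), left map δ₀ : [0] → [1], right map δ₀ : [n+2] → [n+3], bottom map [1] → [n+3] the monotone injection with image {0, 1} (the composite δ_{n+3} ⋯ δ₂). -/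
/-!
A morphism out of `⦋m + 1⦌` is the same as a value `a` at `0` together with a morphism
`f` out of `⦋m⦌` (its restriction along `δ 0`) such that `a ≤ f 0`. A cocone over the span
`⦋1⦌ ← ⦋0⦌ → ⦋m⦌` is an edge `a ≤ b` and a morphism `f` with `f 0 = b`, which is exactly
such a pair.
-/

open CategoryTheory Limits Simplicial

namespace SimplexCategory

variable {m : ℕ} {X : SimplexCategory}

def consHom (a : Fin (X.len + 1)) (f : ⦋m⦌ ⟶ X) (ha : a ≤ f.toOrderHom 0) : ⦋m + 1⦌ ⟶ X :=
  mkHom ⟨Matrix.vecCons a f.toOrderHom, monotone_vecCons.2 ⟨ha, f.toOrderHom.monotone⟩⟩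

@[simp]
lemma δ_zero_comp_consHom (a : Fin (X.len + 1)) (f : ⦋m⦌ ⟶ X) (ha : a ≤ f.toOrderHom 0) :
    δ 0 ≫ consHom a f ha = f := by
  ext i : 3
  simp [consHom, δ]

lemma hom_ext_of_δ_zero {f g : ⦋m + 1⦌ ⟶ X} (h₀ : f.toOrderHom 0 = g.toOrderHom 0)
    (hδ : δ 0 ≫ f = δ 0 ≫ g) : f = g := by
  ext i : 3
  induction i using Fin.cases with
  | zero => exact h₀
  | succ i => exact congr_toOrderHom_apply hδ i

theorem isPushout_const_zero_δ_zero (m : ℕ) :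
    IsPushout (const ⦋0⦌ ⦋m⦌ 0) (δ 0 : ⦋0⦌ ⟶ ⦋1⦌) (δ 0 : ⦋m⦌ ⟶ ⦋m + 1⦌) (mkOfSucc 0) := by
  have w : const ⦋0⦌ ⦋m⦌ 0 ≫ δ 0 = δ 0 ≫ mkOfSucc 0 := Hom.ext_zero_left _ _
  have inl_zero (s : PushoutCocone (const ⦋0⦌ ⦋m⦌ 0) (δ 0 : ⦋0⦌ ⟶ ⦋1⦌)) :
      s.inl.toOrderHom 0 = s.inr.toOrderHom 1 :=
    congr_toOrderHom_apply s.condition 0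
  refine .of_isColimit' ⟨w⟩ (PushoutCocone.IsColimit.mk w
    (fun s ↦ consHom (s.inr.toOrderHom 0) s.inl ?_) (fun s ↦ ?_) (fun s ↦ ?_) ?_)
  · exact (inl_zero s).symm ▸ s.inr.toOrderHom.monotone (Fin.zero_le 1)
  · exact δ_zero_comp_consHom _ _ _
  · exact Hom.ext_one_left _ _ rfl (inl_zero s)
  · intro s g hl hr
    exact hom_ext_of_δ_zero (congr_toOrderHom_apply hr 0)
      (hl.trans (δ_zero_comp_consHom _ _ _).symm)

end SimplexCategory

/-- In the simplex category `Δ`, for every `n ≥ 0` the following square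
is a pushout:
* top map `[0] → [n+2]`: the monotone map picking out the element `0`
  (the composite `δ_{n+2} ⋯ δ₁`),
* left map `δ₀ : [0] → [1]`,
* right map `δ₀ : [n+2] → [n+3]`,
* bottom map `[1] → [n+3]`: the monotone injection with image `{0, 1}`
  (the composite `δ_{n+3} ⋯ δ₂`). -/
theorem isPushout_delta_zero (n : ℕ) :
    IsPushout
      (SimplexCategory.const (SimplexCategory.mk 0) (SimplexCategory.mk (n + 2)) 0)
      (SimplexCategory.δ (0 : Fin 2) : SimplexCategory.mk 0 ⟶ SimplexCategory.mk 1)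
      (SimplexCategory.δ (0 : Fin (n + 4)) :
        SimplexCategory.mk (n + 2) ⟶ SimplexCategory.mk (n + 3))
      (SimplexCategory.mkOfSucc (0 : Fin (n + 3))) :=
  SimplexCategory.isPushout_const_zero_δ_zero (n + 2)
end

section
/- In the simplex category Δ, for every n ≥ 0 and every 0 ≤ i ≤ n+1 the following square is a pushout: top map [1] → [n+2] the monotone injection with image {i, i+1} (the composite δ_{n+2} ⋯ δ_{i+2} δ_{i−1} ⋯ δ₀), left map σ₀ : [1] → [0], right map σᵢ : [n+2] → [n+1], bottom map [0] → [n+1] the monotone map picking out the element i (the composite δ_{n+1} ⋯ δ_{i+1} δ_{i−1} ⋯ δ₀). -/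
open CategoryTheory

open CategoryTheory.Limits in
open SimplexCategory in
lemma isPushout_sigma_aux (n : ℕ) (i : Fin (n + 2)) :
    IsPushout
      (SimplexCategory.mkOfSucc i : SimplexCategory.mk 1 ⟶ SimplexCategory.mk (n + 2))
      (SimplexCategory.σ (0 : Fin 1) : SimplexCategory.mk 1 ⟶ SimplexCategory.mk 0)
      (SimplexCategory.σ i : SimplexCategory.mk (n + 2) ⟶ SimplexCategory.mk (n + 1))
      (SimplexCategory.const (SimplexCategory.mk 0) (SimplexCategory.mk (n + 1)) i) := by
  have w : mkOfSucc i ≫ σ i = σ (0 : Fin 1) ≫ const (mk 0) (mk (n+1)) i := by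
    apply Hom.ext_one_left
    · show Fin.predAbove i i.castSucc = i
      simp
    · show Fin.predAbove i i.succ = i
      simp
  refine IsPushout.of_isColimit' ⟨w⟩ (PushoutCocone.IsColimit.mk _
    (fun s => δ i.castSucc ≫ s.inl) ?_ ?_ ?_)
  · intro s
    have h0 : s.inl.toOrderHom i.castSucc
        = s.inr.toOrderHom ((σ (0 : Fin 1)).toOrderHom 0) :=
      congrArg (fun f => Hom.toOrderHom f 0) s.condition
    have h1 : s.inl.toOrderHom i.succ
        = s.inr.toOrderHom ((σ (0 : Fin 1)).toOrderHom 1) :=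
      congrArg (fun f => Hom.toOrderHom f 1) s.condition
    have key : s.inl.toOrderHom i.castSucc = s.inl.toOrderHom i.succ := by
      rw [h0, h1]
      exact congrArg _ (Subsingleton.elim (α := Fin 1) _ _)
    rw [← Category.assoc]
    apply Hom.ext
    ext x
    simp only [comp_toOrderHom, OrderHom.comp_coe, Function.comp_apply]
    by_cases hx : x = i.castSucc
    · subst hx
      have e1 : (σ i).toOrderHom i.castSucc = i := Fin.predAbove_castSucc_self i
      have e2 : (δ i.castSucc).toOrderHom i = i.succ := Fin.succAbove_castSucc_self i
      rw [e1, e2, ← key]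
    · have e : (δ i.castSucc).toOrderHom ((σ i).toOrderHom x) = x :=
        Fin.succAbove_predAbove hx
      rw [e]
  · intro s
    have h1 : s.inl.toOrderHom i.succ
        = s.inr.toOrderHom ((σ (0 : Fin 1)).toOrderHom 1) :=
      congrArg (fun f => Hom.toOrderHom f 1) s.condition
    rw [← Category.assoc, const_comp, const_comp,
      show (δ i.castSucc).toOrderHom i = i.succ from Fin.succAbove_castSucc_self i, h1,
      show s.inr.toOrderHom ((σ (0 : Fin 1)).toOrderHom 1) = s.inr.toOrderHom 0
        from congrArg _ (Subsingleton.elim (α := Fin 1) _ _)]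
    exact (eq_const_of_zero s.inr).symm
  · intro s m hm₁ hm₂
    rw [← hm₁, ← Category.assoc, δ_comp_σ_self, Category.id_comp]

/-- In the simplex category `Δ`, for every `n ≥ 0` and every
`0 ≤ i ≤ n+1` the following square is a pushout:
* top map `[1] → [n+2]`: the monotone injection with image `{i, i+1}`
  (the composite `δ_{n+2} ⋯ δ_{i+2} δ_{i−1} ⋯ δ₀`),
* left map `σ₀ : [1] → [0]`,
* right map `σᵢ : [n+2] → [n+1]`,
* bottom map `[0] → [n+1]`: the monotone map picking out the element `i`
  (the composite `δ_{n+1} ⋯ δ_{i+1} δ_{i−1} ⋯ δ₀`). -/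
theorem isPushout_sigma (n : ℕ) (i : Fin (n + 2)) :
    IsPushout
      (SimplexCategory.mkOfSucc i : SimplexCategory.mk 1 ⟶ SimplexCategory.mk (n + 2))
      (SimplexCategory.σ (0 : Fin 1) : SimplexCategory.mk 1 ⟶ SimplexCategory.mk 0)
      (SimplexCategory.σ i : SimplexCategory.mk (n + 2) ⟶ SimplexCategory.mk (n + 1))
      (SimplexCategory.const (SimplexCategory.mk 0) (SimplexCategory.mk (n + 1)) i) :=
  isPushout_sigma_aux n i
end
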